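/- arXiv:1901.08727 — 3 statements merged into one kernel-verified Lean document; each statement's English description precedes it below -/
import Mathlib

section
/- Fix an integer n ≥ 2 and θ ∈ (0,1). Then n² − 4nθ(1 − θ) > 0, the number x*(θ) = (n − √(n² − 4nθ(1 − θ)))/(2nθ) is the unique solution in [0,1) of the equation x = (1 − θ)/n + θx² (equivalently nθx² − nx + (1 − θ) = 0), it satisfies 0 < x*(θ) < 1/n, and the function θ ↦ x*(θ) is strictly decreasing on (0,1). -/
/-- The candidate equilibrium value `x*(θ) = (n - √(n² - 4nθ(1-θ)))/(2nθ)`. -/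
noncomputable def xstarVal (n : ℕ) (θ : ℝ) : ℝ :=
  ((n : ℝ) - Real.sqrt ((n : ℝ) ^ 2 - 4 * n * θ * (1 - θ))) / (2 * n * θ)

/-!
`xstarVal n θ` is the smaller root of `q_θ(x) = nθx² - nx + (1 - θ)`, the larger one being
`xstarConj n θ`. A quadratic with positive leading coefficient is negative exactly strictly between
its roots; since `q_θ(1/n) = -θ(1 - 1/n) < 0` and `q_θ(1) = (n - 1)(θ - 1) < 0`, this gives
`x*(θ) < 1/n` and `1 < xstarConj n θ`, so `x*(θ)` is the only root below `1`. For `θ₁ < θ₂`,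
`q_θ₂(x) - q_θ₁(x) = (θ₂ - θ₁)(nx² - 1)` is negative at `x = x*(θ₁) ∈ (0, 1/n)`, hence
`x*(θ₂) < x*(θ₁)`.
-/

theorem quadratic_neg_iff {a b c s x : ℝ} (ha : 0 < a) (hs : 0 ≤ s) (h : discrim a b c = s * s) :
    a * (x * x) + b * x + c < 0 ↔ (-b - s) / (2 * a) < x ∧ x < (-b + s) / (2 * a) := by
  have hfactor : a * (x * x) + b * x + c =
      a * ((x - (-b - s) / (2 * a)) * (x - (-b + s) / (2 * a))) := by
    rw [discrim] at h
    field_simp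
    linear_combination -h
  have hle : (-b - s) / (2 * a) ≤ (-b + s) / (2 * a) := by gcongr; linarith
  rw [hfactor, mul_neg_iff, mul_neg_iff]
  constructor
  · rintro (⟨-, h | h⟩ | ⟨ha', -⟩)
    · exact ⟨sub_pos.mp h.1, sub_neg.mp h.2⟩
    · linarith [sub_neg.mp h.1, sub_pos.mp h.2]
    · linarith
  · rintro ⟨h₁, h₂⟩
    exact Or.inl ⟨ha, Or.inl ⟨sub_pos.mpr h₁, sub_neg.mpr h₂⟩⟩

noncomputable def xstarConj (n : ℕ) (θ : ℝ) : ℝ :=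
  ((n : ℝ) + Real.sqrt ((n : ℝ) ^ 2 - 4 * n * θ * (1 - θ))) / (2 * n * θ)

section Equilibrium

variable {n : ℕ} {θ : ℝ}

theorem equilibrium_discrim_pos (hn : 2 ≤ n) (hθ0 : 0 < θ) (hθ1 : θ < 1) :
    0 < (n : ℝ) ^ 2 - 4 * n * θ * (1 - θ) := by
  have hN : (2 : ℝ) ≤ n := by exact_mod_cast hn
  have hθ : 4 * θ * (1 - θ) ≤ 1 := by nlinarith [sq_nonneg (2 * θ - 1)]
  nlinarith

theorem equilibrium_discrim (hn : 2 ≤ n) (hθ0 : 0 < θ) (hθ1 : θ < 1) :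
    discrim ((n : ℝ) * θ) (-n) (1 - θ) =
      √((n : ℝ) ^ 2 - 4 * n * θ * (1 - θ)) * √((n : ℝ) ^ 2 - 4 * n * θ * (1 - θ)) := by
  rw [Real.mul_self_sqrt (equilibrium_discrim_pos hn hθ0 hθ1).le, discrim]
  ring

theorem eq_add_mul_sq_iff_quadratic_eq_zero (hn : n ≠ 0) (y : ℝ) :
    y = (1 - θ) / n + θ * y ^ 2 ↔ (n : ℝ) * θ * (y * y) + -n * y + (1 - θ) = 0 := by
  have hN : (n : ℝ) ≠ 0 := by exact_mod_cast hn
  have hquad : (n : ℝ) * θ * (y * y) + -n * y + (1 - θ) = -n * (y - ((1 - θ) / n + θ * y ^ 2)) := by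
    field_simp
    ring
  rw [hquad, mul_eq_zero, neg_eq_zero, sub_eq_zero, or_iff_right hN]

theorem xstarVal_eq_root :
    xstarVal n θ = (-(-(n : ℝ)) - √((n : ℝ) ^ 2 - 4 * n * θ * (1 - θ))) / (2 * (n * θ)) := by
  rw [xstarVal, neg_neg, ← mul_assoc]

theorem xstarConj_eq_root :
    xstarConj n θ = (-(-(n : ℝ)) + √((n : ℝ) ^ 2 - 4 * n * θ * (1 - θ))) / (2 * (n * θ)) := by
  rw [xstarConj, neg_neg, ← mul_assoc]

theorem equilibriumQuadratic_eq_zero_iff (hn : 2 ≤ n) (hθ0 : 0 < θ) (hθ1 : θ < 1) (x : ℝ) :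
    (n : ℝ) * θ * (x * x) + -n * x + (1 - θ) = 0 ↔ x = xstarConj n θ ∨ x = xstarVal n θ := by
  have hN : (0 : ℝ) < n := by positivity
  rw [xstarVal_eq_root, xstarConj_eq_root]
  exact quadratic_eq_zero_iff (by positivity) (equilibrium_discrim hn hθ0 hθ1) x

theorem equilibriumQuadratic_neg_iff (hn : 2 ≤ n) (hθ0 : 0 < θ) (hθ1 : θ < 1) {x : ℝ} :
    (n : ℝ) * θ * (x * x) + -n * x + (1 - θ) < 0 ↔ xstarVal n θ < x ∧ x < xstarConj n θ := by
  have hN : (0 : ℝ) < n := by positivity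
  rw [xstarVal_eq_root, xstarConj_eq_root]
  exact quadratic_neg_iff (by positivity) (Real.sqrt_nonneg _) (equilibrium_discrim hn hθ0 hθ1)

theorem xstarVal_eq (hn : 2 ≤ n) (hθ0 : 0 < θ) (hθ1 : θ < 1) :
    xstarVal n θ = (1 - θ) / n + θ * xstarVal n θ ^ 2 :=
  (eq_add_mul_sq_iff_quadratic_eq_zero (by omega) _).mpr
    ((equilibriumQuadratic_eq_zero_iff hn hθ0 hθ1 _).mpr (Or.inr rfl))

theorem xstarVal_pos (hn : 2 ≤ n) (hθ0 : 0 < θ) (hθ1 : θ < 1) : 0 < xstarVal n θ := by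
  have hN : (0 : ℝ) < n := by positivity
  have hsqrt : √((n : ℝ) ^ 2 - 4 * n * θ * (1 - θ)) < n := by
    rw [Real.sqrt_lt' hN]
    nlinarith [mul_pos (mul_pos hN hθ0) (sub_pos.mpr hθ1)]
  rw [xstarVal]
  exact div_pos (by linarith) (by positivity)

theorem xstarVal_lt_inv (hn : 2 ≤ n) (hθ0 : 0 < θ) (hθ1 : θ < 1) : xstarVal n θ < 1 / n := by
  have hN : (2 : ℝ) ≤ n := by exact_mod_cast hn
  refine ((equilibriumQuadratic_neg_iff hn hθ0 hθ1).mp ?_).1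
  have hval : (n : ℝ) * θ * (1 / n * (1 / n)) + -n * (1 / n) + (1 - θ) = -θ * (1 - 1 / n) := by
    field_simp
    ring
  rw [hval]
  have : 1 / (n : ℝ) < 1 := by rw [div_lt_one] <;> linarith
  nlinarith

theorem one_lt_xstarConj (hn : 2 ≤ n) (hθ0 : 0 < θ) (hθ1 : θ < 1) : 1 < xstarConj n θ := by
  have hN : (2 : ℝ) ≤ n := by exact_mod_cast hn
  refine ((equilibriumQuadratic_neg_iff hn hθ0 hθ1).mp ?_).2
  nlinarith

theorem eq_xstarVal_of_lt_one (hn : 2 ≤ n) (hθ0 : 0 < θ) (hθ1 : θ < 1) {y : ℝ} (hy1 : y < 1)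
    (hy : y = (1 - θ) / n + θ * y ^ 2) : y = xstarVal n θ :=
  (((equilibriumQuadratic_eq_zero_iff hn hθ0 hθ1 y).mp
    ((eq_add_mul_sq_iff_quadratic_eq_zero (by omega) y).mp hy)).resolve_left
    (by linarith [one_lt_xstarConj hn hθ0 hθ1]))

theorem xstarVal_strictAntiOn (hn : 2 ≤ n) : StrictAntiOn (xstarVal n) (Set.Ioo 0 1) := by
  rintro θ₁ ⟨hθ₁0, hθ₁1⟩ θ₂ ⟨hθ₂0, hθ₂1⟩ hθ
  set a := xstarVal n θ₁
  have hN : (2 : ℝ) ≤ n := by exact_mod_cast hn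
  have ha0 := xstarVal_pos hn hθ₁0 hθ₁1
  have hna : n * a < 1 := by
    have := xstarVal_lt_inv hn hθ₁0 hθ₁1
    rwa [lt_div_iff₀ (by positivity), mul_comm] at this
  have hroot : (n : ℝ) * θ₁ * (a * a) + -n * a + (1 - θ₁) = 0 :=
    (equilibriumQuadratic_eq_zero_iff hn hθ₁0 hθ₁1 a).mpr (Or.inr rfl)
  have hshift : (n : ℝ) * θ₂ * (a * a) + -n * a + (1 - θ₂) = (θ₂ - θ₁) * (n * a * a - 1) := by
    linear_combination hroot
  refine ((equilibriumQuadratic_neg_iff hn hθ₂0 hθ₂1).mp ?_).1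
  rw [hshift]
  exact mul_neg_of_pos_of_neg (sub_pos.mpr hθ) (by nlinarith)

end Equilibrium

theorem stmt14 (n : ℕ) (hn : 2 ≤ n) (θ : ℝ) (hθ0 : 0 < θ) (hθ1 : θ < 1) :
    0 < (n : ℝ) ^ 2 - 4 * n * θ * (1 - θ) ∧
    xstarVal n θ = (1 - θ) / n + θ * xstarVal n θ ^ 2 ∧
    (∀ y : ℝ, 0 ≤ y → y < 1 → y = (1 - θ) / n + θ * y ^ 2 → y = xstarVal n θ) ∧
    0 < xstarVal n θ ∧ xstarVal n θ < 1 / n ∧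
    StrictAntiOn (fun t : ℝ => xstarVal n t) (Set.Ioo 0 1) :=
  ⟨equilibrium_discrim_pos hn hθ0 hθ1, xstarVal_eq hn hθ0 hθ1,
    fun _ _ hy1 hy => eq_xstarVal_of_lt_one hn hθ0 hθ1 hy1 hy, xstarVal_pos hn hθ0 hθ1,
    xstarVal_lt_inv hn hθ0 hθ1, xstarVal_strictAntiOn hn⟩
end

section
/- Suppose 𝒢(C) is a star topology with center node l, the center is partially stubborn with 0 < θ_l < 1, and C_li = 0 for every partially stubborn i ≠ l. Let r be the number of fully stubborn individuals. Then F has a unique fixed point x* in Δ_n, and it satisfies: (a) for every partially stubborn i ≠ l, x*_i = (n − √(n² − 4nθ_i(1 − θ_i)))/(2nθ_i), which is strictly decreasing as a function of θ_i; (b) x*_l = (n − √(n² − 4nθ_l(1 − θ_l)ξ*))/(2nθ_l), where ξ* = n − r − n·Σ_{j partially stubborn, j ≠ l} x*_j; (c) x*_i = 1/n + (ξ*/n − x*_l)·C_li for every fully stubborn i. -/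
/-- Facts about the smaller root of `N t y² - N y + (1-t)·c = 0`. -/
lemma quad_facts (N t c : ℝ) (hN : 0 < N) (ht : 0 < t) (ht1 : t < 1)
    (hc : 0 < c) (hcn : c < N) :
    N * t * ((N - Real.sqrt (N^2 - 4*N*t*(1-t)*c)) / (2*N*t))^2
      - N * ((N - Real.sqrt (N^2 - 4*N*t*(1-t)*c)) / (2*N*t)) + (1-t)*c = 0 ∧
    0 < (N - Real.sqrt (N^2 - 4*N*t*(1-t)*c)) / (2*N*t) ∧
    (N - Real.sqrt (N^2 - 4*N*t*(1-t)*c)) / (2*N*t) < c / N ∧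
    ∀ y : ℝ, N * t * y^2 - N * y + (1-t)*c = 0 → y ≤ 1 →
      y = (N - Real.sqrt (N^2 - 4*N*t*(1-t)*c)) / (2*N*t) := by
  have hDpos : 0 < N^2 - 4*N*t*(1-t)*c := by
    nlinarith [mul_nonneg (sq_nonneg (1 - 2*t)) (mul_pos hN hc).le, mul_pos hN hc]
  have hDlt : N^2 - 4*N*t*(1-t)*c < N^2 := by
    nlinarith [mul_pos (mul_pos (mul_pos hN ht) (sub_pos.2 ht1)) hc]
  set D : ℝ := N^2 - 4*N*t*(1-t)*c with hD
  have hsq : Real.sqrt D ^ 2 = D := Real.sq_sqrt hDpos.le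
  have hsnn : 0 ≤ Real.sqrt D := Real.sqrt_nonneg D
  have hsltN : Real.sqrt D < N := by
    have := Real.sqrt_lt_sqrt (le_of_lt hDpos) hDlt
    rwa [Real.sqrt_sq hN.le] at this
  set x : ℝ := (N - Real.sqrt D) / (2*N*t) with hx
  have h2Nt : (2*N*t) ≠ 0 := by positivity
  have hroot : N * t * x^2 - N * x + (1-t)*c = 0 := by
    rw [hx]
    field_simp
    nlinarith [hsq]
  have hxpos : 0 < x := by
    apply div_pos (by linarith) (by positivity)
  have hxlt : x < c / N := by
    rw [hx, div_lt_div_iff₀ (by positivity) hN]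
    have key : N - 2*t*c < Real.sqrt D := by
      rcases le_or_gt (N - 2*t*c) 0 with h | h
      · calc N - 2*t*c ≤ 0 := h
          _ < Real.sqrt D := Real.sqrt_pos.2 hDpos
      · have : (N - 2*t*c)^2 < D := by nlinarith [mul_pos (mul_pos ht ht) hc]
        nlinarith [hsq, hsnn]
    nlinarith
  refine ⟨hroot, hxpos, hxlt, ?_⟩
  intro y hy hy1
  have hti : t * (1/t) = 1 := by field_simp
  have hfact : ∀ z : ℝ, N * t * z^2 - N * z + (1-t)*c = N * t * (z - x) * (z - (1/t - x)) := by
    intro z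
    linear_combination (N*z - N*x) * hti + hroot
  have hxlt1 : x < 1 := by
    have : c / N < 1 := (div_lt_one hN).2 hcn
    linarith
  have hother : 1 < 1/t - x := by
    have h1 : N * t * (1 - x) * (1 - (1/t - x)) = (1-t)*(c - N) := by
      linear_combination - (hfact 1)
    have hA : 0 < N * t * (1 - x) := mul_pos (mul_pos hN ht) (by linarith)
    have hneg : N * t * (1 - x) * (1 - (1/t - x)) < 0 := by
      rw [h1]; nlinarith
    nlinarith [hA, hneg]
  have hfy := hfact y
  rw [hy] at hfy
  rcases mul_eq_zero.1 hfy.symm with h | h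
  · rcases mul_eq_zero.1 h with h' | h'
    · exact absurd h' (by positivity)
    · linarith [sub_eq_zero.1 h']
  · have : y = 1/t - x := by linarith [sub_eq_zero.1 h]
    linarith

open Matrix

/-- `W(x) = diag(x) + (I - diag(x)) C` -/
noncomputable def Wmat {n : ℕ} (C : Matrix (Fin n) (Fin n) ℝ) (x : Fin n → ℝ) :
    Matrix (Fin n) (Fin n) ℝ :=
  Matrix.diagonal x + (1 - Matrix.diagonal x) * C

/-- `F(x) = (I - Θ)(I - W(x)ᵀΘ)⁻¹ (1/n) 1_n` -/
noncomputable def Fmap {n : ℕ} (C : Matrix (Fin n) (Fin n) ℝ) (θ : Fin n → ℝ)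
    (x : Fin n → ℝ) : Fin n → ℝ :=
  ((1 - Matrix.diagonal θ) * (1 - (Wmat C x)ᵀ * Matrix.diagonal θ)⁻¹).mulVec
    (fun _ => 1 / (n : ℝ))

/-- The simplex `Δ_n`. -/
def simplex (n : ℕ) : Set (Fin n → ℝ) := {x | (∀ i, 0 ≤ x i) ∧ ∑ i, x i = 1}

lemma Wmat_apply {n : ℕ} (C : Matrix (Fin n) (Fin n) ℝ) (x : Fin n → ℝ) (i j : Fin n) :
    Wmat C x i j = (if i = j then x i else 0) + (1 - x i) * C i j := by
  have h1 : (1 : Matrix (Fin n) (Fin n) ℝ) - Matrix.diagonal x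
      = Matrix.diagonal (fun i => 1 - x i) := by
    rw [← Matrix.diagonal_one, Matrix.diagonal_sub]
  rw [Wmat, h1]
  simp [Matrix.add_apply, Matrix.diagonal_mul, Matrix.diagonal_apply]

lemma Wmat_nonneg {n : ℕ} (C : Matrix (Fin n) (Fin n) ℝ) (x : Fin n → ℝ)
    (hC : ∀ i j, 0 ≤ C i j) (hx0 : ∀ i, 0 ≤ x i) (hx1 : ∀ i, x i ≤ 1) (i j : Fin n) :
    0 ≤ Wmat C x i j := by
  rw [Wmat_apply]
  have := hC i j
  have h1 := hx0 i
  have h2 := hx1 i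
  split <;> nlinarith

lemma Wmat_rowsum {n : ℕ} (C : Matrix (Fin n) (Fin n) ℝ) (x : Fin n → ℝ)
    (hCrow : ∀ i, ∑ j, C i j = 1) (i : Fin n) :
    ∑ j, Wmat C x i j = 1 := by
  simp only [Wmat_apply]
  rw [Finset.sum_add_distrib, ← Finset.mul_sum, hCrow, Finset.sum_ite_eq (Finset.univ) i (fun _ => x i)]
  simp

lemma isUnit_A {n : ℕ} (hn : 0 < n) (C : Matrix (Fin n) (Fin n) ℝ)
    (hC : ∀ i j, 0 ≤ C i j) (hCrow : ∀ i, ∑ j, C i j = 1)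
    (θ : Fin n → ℝ) (hθ0 : ∀ i, 0 ≤ θ i) (hθ1 : ∀ i, θ i < 1)
    (x : Fin n → ℝ) (hx0 : ∀ i, 0 ≤ x i) (hx1 : ∀ i, x i ≤ 1) :
    IsUnit ((1 - (Wmat C x)ᵀ * Matrix.diagonal θ)).det := by
  haveI : NeZero n := ⟨hn.ne'⟩
  have htr : (1 - (Wmat C x)ᵀ * Matrix.diagonal θ).det
      = (1 - Matrix.diagonal θ * Wmat C x).det := by
    rw [← Matrix.det_transpose]
    congr 1
    rw [Matrix.transpose_sub, Matrix.transpose_one, Matrix.transpose_mul,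
      Matrix.transpose_transpose, Matrix.diagonal_transpose]
  rw [htr]
  rw [← Matrix.isUnit_iff_isUnit_det]
  rw [← Matrix.mulVec_injective_iff_isUnit]
  set M := (1 : Matrix (Fin n) (Fin n) ℝ) - Matrix.diagonal θ * Wmat C x with hM
  have hker : ∀ v : Fin n → ℝ, M.mulVec v = 0 → v = 0 := by
    intro v hv
    by_contra hne
    obtain ⟨i0, -, hi0⟩ := Finset.exists_max_image Finset.univ (fun i => |v i|)
      (Finset.univ_nonempty)
    have hmaxpos : 0 < |v i0| := by
      rcases Function.ne_iff.1 hne with ⟨j, hj⟩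
      have := hi0 j (Finset.mem_univ j)
      have : 0 < |v j| := abs_pos.2 hj
      linarith [hi0 j (Finset.mem_univ j)]
    have heq : v i0 = θ i0 * ∑ j, Wmat C x i0 j * v j := by
      have h := congrFun hv i0
      rw [hM, Matrix.sub_mulVec, Matrix.one_mulVec, ← Matrix.mulVec_mulVec] at h
      simp only [Matrix.mulVec_diagonal, Pi.sub_apply, Pi.zero_apply, sub_eq_zero] at h
      rw [h]
      simp [Matrix.mulVec, dotProduct]
    have hsum : |∑ j, Wmat C x i0 j * v j| ≤ |v i0| :=
      calc |∑ j, Wmat C x i0 j * v j| ≤ ∑ j, |Wmat C x i0 j * v j| :=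
            Finset.abs_sum_le_sum_abs _ _
        _ ≤ ∑ j, Wmat C x i0 j * |v i0| := by
            apply Finset.sum_le_sum
            intro j _
            rw [abs_mul, abs_of_nonneg (Wmat_nonneg C x hC hx0 hx1 i0 j)]
            exact mul_le_mul_of_nonneg_left (hi0 j (Finset.mem_univ j))
              (Wmat_nonneg C x hC hx0 hx1 i0 j)
        _ = |v i0| := by rw [← Finset.sum_mul, Wmat_rowsum C x hCrow, one_mul]
    have hbound : |v i0| ≤ θ i0 * |v i0| :=
      calc |v i0| = θ i0 * |∑ j, Wmat C x i0 j * v j| := by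
            rw [heq, abs_mul, abs_of_nonneg (hθ0 i0)]
        _ ≤ θ i0 * |v i0| := mul_le_mul_of_nonneg_left hsum (hθ0 i0)
    nlinarith [hθ1 i0]
  intro u w huw
  have : M.mulVec (u - w) = 0 := by
    rw [Matrix.mulVec_sub, huw, sub_self]
  have := hker _ this
  funext i
  have := congrFun this i
  simpa [sub_eq_zero] using this
lemma sum_W {n : ℕ} (C : Matrix (Fin n) (Fin n) ℝ) (x u : Fin n → ℝ) (i : Fin n) :
    ∑ j, Wmat C x j i * u j = x i * u i + ∑ j, (1 - x j) * C j i * u j := by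
  simp only [Wmat_apply, add_mul, ite_mul, zero_mul]
  rw [Finset.sum_add_distrib, Finset.sum_ite_eq' Finset.univ i (fun j => x j * u j)]
  simp [mul_assoc]
lemma fixed_iff {n : ℕ} (hn : 0 < n) (C : Matrix (Fin n) (Fin n) ℝ)
    (hC : ∀ i j, 0 ≤ C i j) (hCrow : ∀ i, ∑ j, C i j = 1)
    (θ : Fin n → ℝ) (hθ0 : ∀ i, 0 ≤ θ i) (hθ1 : ∀ i, θ i < 1)
    (x : Fin n → ℝ) (hx0 : ∀ i, 0 ≤ x i) (hx1 : ∀ i, x i ≤ 1) :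
    Fmap C θ x = x ↔
      ∀ i, x i / (1 - θ i)
        - ∑ j, Wmat C x j i * (θ j * (x j / (1 - θ j))) = 1 / (n : ℝ) := by
  have hθne : ∀ i, (1 : ℝ) - θ i ≠ 0 := fun i => by have := hθ1 i; intro h; linarith [h]
  set A : Matrix (Fin n) (Fin n) ℝ := 1 - (Wmat C x)ᵀ * Matrix.diagonal θ with hA
  have hAu : IsUnit A.det := isUnit_A hn C hC hCrow θ hθ0 hθ1 x hx0 hx1
  set y : Fin n → ℝ := fun i => x i / (1 - θ i) with hy
  set c : Fin n → ℝ := fun _ => 1 / (n : ℝ) with hc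
  have hDdiag : (1 : Matrix (Fin n) (Fin n) ℝ) - Matrix.diagonal θ
      = Matrix.diagonal (fun i => 1 - θ i) := by
    rw [← Matrix.diagonal_one, Matrix.diagonal_sub]
  have hDy : ((1 : Matrix (Fin n) (Fin n) ℝ) - Matrix.diagonal θ) *ᵥ y = x := by
    funext i
    rw [hDdiag]
    simp only [Matrix.mulVec_diagonal, hy]
    rw [← mul_div_assoc]
    exact mul_div_cancel_left₀ (x i) (hθne i)
  have step1 : Fmap C θ x = x ↔ A⁻¹ *ᵥ c = y := by
    constructor
    · intro h
      have h2 : ((1 : Matrix (Fin n) (Fin n) ℝ) - Matrix.diagonal θ) *ᵥ (A⁻¹ *ᵥ c)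
          = ((1 : Matrix (Fin n) (Fin n) ℝ) - Matrix.diagonal θ) *ᵥ y := by
        rw [hDy, Matrix.mulVec_mulVec]
        exact h
      funext i
      have h3 := congrFun h2 i
      rw [hDdiag] at h3
      simp only [Matrix.mulVec_diagonal] at h3
      exact mul_left_cancel₀ (hθne i) h3
    · intro h
      show ((1 - Matrix.diagonal θ) * A⁻¹) *ᵥ c = x
      rw [← Matrix.mulVec_mulVec, h, hDy]
  have step2 : A⁻¹ *ᵥ c = y ↔ A *ᵥ y = c := by
    constructor
    · intro h
      rw [← h, Matrix.mulVec_mulVec, Matrix.mul_nonsing_inv A hAu, Matrix.one_mulVec]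
    · intro h
      rw [← h, Matrix.mulVec_mulVec, Matrix.nonsing_inv_mul A hAu, Matrix.one_mulVec]
  have step3 : ∀ i, (A *ᵥ y) i
      = y i - ∑ j, Wmat C x j i * (θ j * y j) := by
    intro i
    rw [hA, Matrix.sub_mulVec, Matrix.one_mulVec]
    simp only [Pi.sub_apply, Matrix.mulVec, dotProduct, Matrix.mul_diagonal,
      Matrix.transpose_apply]
    congr 1
    exact Finset.sum_congr rfl (fun j _ => by ring)
  rw [step1, step2, funext_iff]
  constructor
  · intro h i
    have := h i
    rw [step3 i] at this
    exact this
  · intro h i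
    rw [step3 i]
    exact h i
lemma g_anti (N : ℝ) (hN2 : 2 ≤ N) :
    StrictAntiOn (fun t : ℝ => (N - Real.sqrt (N^2 - 4*N*t*(1-t))) / (2*N*t))
      (Set.Ioo 0 1) := by
  have hN : 0 < N := by linarith
  intro t1 ht1 t2 ht2 h12
  simp only [Set.mem_Ioo] at ht1 ht2
  obtain ⟨E1, hp1, hl1, -⟩ := quad_facts N t1 1 hN ht1.1 ht1.2 one_pos (by linarith)
  obtain ⟨E2, hp2, hl2, -⟩ := quad_facts N t2 1 hN ht2.1 ht2.2 one_pos (by linarith)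
  simp only [mul_one] at E1 hp1 hl1 E2 hp2 hl2
  set x1 : ℝ := (N - Real.sqrt (N^2 - 4*N*t1*(1-t1))) / (2*N*t1) with hx1
  set x2 : ℝ := (N - Real.sqrt (N^2 - 4*N*t2*(1-t2))) / (2*N*t2) with hx2
  show x2 < x1
  by_contra hcon
  push_neg at hcon
  have hx2N : x2 < 1/N := hl2
  have hx1N : x1 < 1/N := hl1
  have hNx2 : x2 * N < 1 := (lt_div_iff₀ hN).1 hx2N
  have h1N : 1/N ≤ 1 := by rw [div_le_one hN]; linarith
  have h2N : 2/N ≤ 1 := by rw [div_le_one hN]; linarith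
  have hA : N*(t2-t1)*x2^2 < t2 - t1 := by
    have h1 : N * x2^2 < 1 := by nlinarith [hp2, hNx2, hx2N]
    nlinarith [sub_pos.2 h12, h1]
  have hB : 0 ≤ (x2 - x1) * (1 - t1*(x1+x2)) := by
    apply mul_nonneg (by linarith)
    have h11 : (1:ℝ)/N + 1/N = 2/N := by ring
    have hxx : x1 + x2 < 2/N := by linarith [h11]
    nlinarith [mul_nonneg (by linarith : (0:ℝ) ≤ 1 - t1) (by linarith : (0:ℝ) ≤ x1 + x2), hxx, h2N]
  have hB' : 0 ≤ N * ((x2 - x1) * (1 - t1*(x1+x2))) := mul_nonneg hN.le hB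
  have hid : (t2 - t1) = N*(t2-t1)*x2^2 - N*((x2 - x1)*(1 - t1*(x1+x2))) := by
    linear_combination E1 - E2
  linarith

theorem stmt16 (n : ℕ) (hn : 2 ≤ n) (C : Matrix (Fin n) (Fin n) ℝ)
    (hCnonneg : ∀ i j, 0 ≤ C i j) (hCrow : ∀ i, ∑ j, C i j = 1)
    (hCdiag : ∀ i, C i i = 0)
    (θ : Fin n → ℝ) (hθ0 : ∀ i, 0 ≤ θ i) (hθ1 : ∀ i, θ i < 1) (hθex : ∃ j, 0 < θ j)
    (l : Fin n) (hstar : ∀ i, i ≠ l → C i l = 1 ∧ ∀ j, j ≠ l → C i j = 0)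
    (hl : 0 < θ l)
    (hCl : ∀ i, 0 < θ i → i ≠ l → C l i = 0)
    (r : ℕ) (hrdef : r = (Finset.univ.filter (fun i : Fin n => θ i = 0)).card) :
    ∃ xstar : Fin n → ℝ,
      (xstar ∈ simplex n ∧ Fmap C θ xstar = xstar) ∧
      (∀ y, y ∈ simplex n ∧ Fmap C θ y = y → y = xstar) ∧
      (∀ i, 0 < θ i → i ≠ l →
        xstar i = ((n : ℝ) - Real.sqrt ((n : ℝ) ^ 2 - 4 * n * θ i * (1 - θ i))) /
          (2 * n * θ i)) ∧
      StrictAntiOn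
        (fun t : ℝ => ((n : ℝ) - Real.sqrt ((n : ℝ) ^ 2 - 4 * n * t * (1 - t))) / (2 * n * t))
        (Set.Ioo 0 1) ∧
      (xstar l = ((n : ℝ) - Real.sqrt ((n : ℝ) ^ 2 - 4 * n * θ l * (1 - θ l) *
            ((n : ℝ) - r - n * ∑ j ∈ Finset.univ.filter (fun j => 0 < θ j ∧ j ≠ l), xstar j))) /
          (2 * n * θ l)) ∧
      (∀ i, θ i = 0 →
        xstar i = 1 / n +
          (((n : ℝ) - r - n * ∑ j ∈ Finset.univ.filter (fun j => 0 < θ j ∧ j ≠ l), xstar j) / n -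
            xstar l) * C l i) := by
  classical
  have hn0 : 0 < n := by omega
  haveI : NeZero n := ⟨hn0.ne'⟩
  have hθne : ∀ i, (1 : ℝ) - θ i ≠ 0 := fun i => by have := hθ1 i; intro h; linarith
  set N : ℝ := (n : ℝ) with hNd
  have hNpos : (0 : ℝ) < N := by rw [hNd]; exact_mod_cast hn0
  have hN2 : (2 : ℝ) ≤ N := by rw [hNd]; exact_mod_cast hn
  set P : Finset (Fin n) := Finset.univ.filter (fun j => 0 < θ j ∧ j ≠ l) with hPd
  have hPθ : ∀ j ∈ P, 0 < θ j ∧ j ≠ l := fun j hj => (Finset.mem_filter.1 hj).2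
  -- cardinality of P
  have hPeq : P = (Finset.univ.filter (fun j => ¬ θ j = 0)).erase l := by
    ext j
    simp only [hPd, Finset.mem_filter, Finset.mem_erase, Finset.mem_univ, true_and]
    constructor
    · rintro ⟨h1, h2⟩; exact ⟨h2, h1.ne'⟩
    · rintro ⟨h2, h1⟩; exact ⟨(hθ0 j).lt_of_ne (Ne.symm h1), h2⟩
  have hlmem : l ∈ Finset.univ.filter (fun j : Fin n => ¬ θ j = 0) := by
    simp [hl.ne']
  have hcard : r + P.card + 1 = n := by
    have h1 : (Finset.univ.filter (fun i : Fin n => θ i = 0)).card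
        + (Finset.univ.filter (fun j : Fin n => ¬ θ j = 0)).card = n := by
      rw [Finset.card_filter_add_card_filter_not]
      simp
    have h2 : P.card = (Finset.univ.filter (fun j : Fin n => ¬ θ j = 0)).card - 1 := by
      rw [hPeq, Finset.card_erase_of_mem hlmem]
    have h3 : 1 ≤ (Finset.univ.filter (fun j : Fin n => ¬ θ j = 0)).card :=
      Finset.card_pos.2 ⟨l, hlmem⟩
    omega
  have hcastcard : (r : ℝ) + (P.card : ℝ) + 1 = N := by
    have := hcard
    rw [hNd]
    exact_mod_cast congrArg (fun k : ℕ => (k : ℝ)) this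
  have hr1 : 1 ≤ r := by
    rcases Nat.eq_zero_or_pos r with h0 | h
    swap
    · exact h
    exfalso
    have hFe : (Finset.univ.filter (fun i : Fin n => θ i = 0)) = ∅ :=
      Finset.card_eq_zero.1 (by omega)
    have hpos : ∀ i : Fin n, 0 < θ i := by
      intro i
      rcases (hθ0 i).lt_or_eq with h' | h'
      · exact h'
      exfalso
      have hmem : i ∈ Finset.univ.filter (fun i : Fin n => θ i = 0) := by
        simp [h'.symm]
      rw [hFe] at hmem
      simp at hmem
    have hzero : ∑ j, C l j = 0 := Finset.sum_eq_zero (fun j _ => by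
      by_cases hj : j = l
      · rw [hj]; exact hCdiag l
      · exact hCl j (hpos j) hj)
    rw [hCrow l] at hzero
    norm_num at hzero
  -- quadratic data for partially stubborn non-center individuals
  obtain ⟨g, hgd⟩ : ∃ g' : ℝ → ℝ,
      g' = fun t => (N - Real.sqrt (N ^ 2 - 4 * N * t * (1 - t))) / (2 * N * t) := ⟨_, rfl⟩
  have hgfacts : ∀ t : ℝ, 0 < t → t < 1 →
      N * t * (g t) ^ 2 - N * (g t) + (1 - t) = 0 ∧ 0 < g t ∧ g t < 1 / N ∧
      ∀ y : ℝ, N * t * y ^ 2 - N * y + (1 - t) = 0 → y ≤ 1 → y = g t := by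
    intro t h0 h1
    obtain ⟨e, p, lt', u⟩ := quad_facts N t 1 hNpos h0 h1 one_pos (by linarith)
    simp only [mul_one] at e p lt' u
    simp only [hgd]
    exact ⟨e, p, lt', u⟩
  obtain ⟨S, hSd⟩ : ∃ S' : ℝ, S' = ∑ j ∈ P, g (θ j) := ⟨_, rfl⟩
  have hS0 : 0 ≤ S := by
    rw [hSd]
    exact Finset.sum_nonneg (fun j hj => ((hgfacts (θ j) (hPθ j hj).1 (hθ1 j)).2.1).le)
  have hSle : N * S ≤ (P.card : ℝ) := by
    rw [hSd, Finset.mul_sum]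
    calc ∑ j ∈ P, N * g (θ j) ≤ ∑ _j ∈ P, (1 : ℝ) := by
          apply Finset.sum_le_sum
          intro j hj
          have h := (hgfacts (θ j) (hPθ j hj).1 (hθ1 j)).2.2.1
          have h2 := mul_lt_mul_of_pos_left h hNpos
          rw [mul_one_div, div_self hNpos.ne'] at h2
          linarith
      _ = (P.card : ℝ) := by simp
  obtain ⟨ξ, hξd⟩ : ∃ z : ℝ, z = N - (r : ℝ) - N * S := ⟨_, rfl⟩
  have hξ1 : 1 ≤ ξ := by rw [hξd]; linarith [hcastcard, hSle]
  have hξpos : 0 < ξ := by linarith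
  have hξle : ξ ≤ N - 1 := by
    rw [hξd]
    have h1 : 0 ≤ N * S := mul_nonneg hNpos.le hS0
    have h2 : (1 : ℝ) ≤ (r : ℝ) := by exact_mod_cast hr1
    linarith
  have hξlt : ξ < N := by linarith
  obtain ⟨xl, hxld⟩ : ∃ x' : ℝ,
      x' = (N - Real.sqrt (N ^ 2 - 4 * N * θ l * (1 - θ l) * ξ)) / (2 * N * θ l) := ⟨_, rfl⟩
  obtain ⟨El, hxlpos, hxllt, hxluniq⟩ := quad_facts N (θ l) ξ hNpos hl (hθ1 l) hξpos hξlt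
  rw [← hxld] at El hxlpos hxllt hxluniq
  have hxl1 : xl ≤ 1 := by
    have h1 : ξ / N < 1 := (div_lt_one hNpos).2 hξlt
    linarith [hxllt]
  have hkey : ξ / N - xl = θ l * xl * (1 - xl) / (1 - θ l) := by
    have e11 : θ l * xl * (1 - xl) * N = (ξ - N * xl) * (1 - θ l) := by
      linear_combination -El
    have e12 : ξ / N - xl = (ξ - N * xl) / N := by
      rw [sub_div, mul_div_cancel_left₀ _ hNpos.ne']
    rw [e12, div_eq_div_iff hNpos.ne' (hθne l)]
    linear_combination -e11
  -- the candidate fixed point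
  set xstar : Fin n → ℝ := fun i =>
    if i = l then xl else if 0 < θ i then g (θ i) else 1 / N + (ξ / N - xl) * C l i with hxsd
  have hxs_l : xstar l = xl := by simp [hxsd]
  have hxs_P : ∀ j, 0 < θ j → j ≠ l → xstar j = g (θ j) := fun j h1 h2 => by
    simp [hxsd, h2, h1]
  have hxs_F : ∀ i, θ i = 0 → xstar i = 1 / N + (ξ / N - xl) * C l i := by
    intro i h
    have hil : i ≠ l := fun e => by rw [e] at h; exact hl.ne' h
    simp [hxsd, hil, h]
  have hsumP : ∑ j ∈ P, xstar j = S := by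
    rw [hSd]
    exact Finset.sum_congr rfl (fun j hj => hxs_P j (hPθ j hj).1 (hPθ j hj).2)
  have hFzero : ∀ j : Fin n, j ≠ l → ¬ 0 < θ j → θ j = 0 := fun j _ h =>
    le_antisymm (not_lt.1 h) (hθ0 j)
  have h1N : 1 / N ≤ 1 := by rw [div_le_one hNpos]; linarith
  have hxs0 : ∀ i, 0 ≤ xstar i := by
    intro i
    by_cases hil : i = l
    · rw [hil, hxs_l]; exact hxlpos.le
    by_cases hp : 0 < θ i
    · rw [hxs_P i hp hil]; exact ((hgfacts (θ i) hp (hθ1 i)).2.1).le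
    · rw [hxs_F i (hFzero i hil hp)]
      have h1 : 0 ≤ ξ / N - xl := by linarith [hxllt]
      have h2 : 0 ≤ (ξ / N - xl) * C l i := mul_nonneg h1 (hCnonneg l i)
      have h3 : 0 < 1 / N := by positivity
      linarith
  have hCle1 : ∀ i, C l i ≤ 1 := by
    intro i
    rw [← hCrow l]
    exact Finset.single_le_sum (fun j _ => hCnonneg l j) (Finset.mem_univ i)
  have hxs1 : ∀ i, xstar i ≤ 1 := by
    intro i
    by_cases hil : i = l
    · rw [hil, hxs_l]; exact hxl1
    by_cases hp : 0 < θ i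
    · rw [hxs_P i hp hil]
      have h := (hgfacts (θ i) hp (hθ1 i)).2.2.1
      linarith
    · rw [hxs_F i (hFzero i hil hp)]
      have h1 : 0 ≤ ξ / N - xl := by linarith [hxllt]
      have h2 : (ξ / N - xl) * C l i ≤ (ξ / N - xl) * 1 :=
        mul_le_mul_of_nonneg_left (hCle1 i) h1
      have h3 : ξ / N ≤ 1 - 1 / N := by
        rw [div_le_iff₀ hNpos]
        have : (1 - 1 / N) * N = N - 1 := by field_simp
        rw [this]
        exact hξle
      linarith [hxlpos]
  -- partition of the universe
  have hPsub : P ⊆ Finset.univ.erase l := fun j hj =>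
    Finset.mem_erase.2 ⟨(hPθ j hj).2, Finset.mem_univ j⟩
  have hCl_sum : ∑ i ∈ Finset.univ.filter (fun i : Fin n => θ i = 0), C l i = 1 := by
    rw [← hCrow l]
    apply Finset.sum_subset (Finset.filter_subset _ _)
    intro j _ hj
    simp only [Finset.mem_filter, Finset.mem_univ, true_and] at hj
    by_cases hjl : j = l
    · rw [hjl]; exact hCdiag l
    · exact hCl j ((hθ0 j).lt_of_ne (Ne.symm hj)) hjl
  have hsplit : Finset.univ.erase l = P ∪ Finset.univ.filter (fun i : Fin n => θ i = 0) := by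
    ext j
    simp only [Finset.mem_erase, Finset.mem_univ, true_and, and_true, Finset.mem_union,
      Finset.mem_filter, hPd]
    constructor
    · intro hj
      by_cases hp : 0 < θ j
      · exact Or.inl ⟨hp, hj⟩
      · exact Or.inr (hFzero j hj hp)
    · rintro (⟨h1, h2⟩ | h1)
      · exact h2
      · intro e; rw [e] at h1; exact hl.ne' h1
  have hdisj : Disjoint P (Finset.univ.filter (fun i : Fin n => θ i = 0)) := by
    rw [Finset.disjoint_left]
    intro j hj hj2
    simp only [Finset.mem_filter] at hj2
    exact (hPθ j hj).1.ne' hj2.2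
  have hsum_xstar : ∑ i, xstar i = 1 := by
    rw [← Finset.sum_erase_add Finset.univ xstar (Finset.mem_univ l), hsplit,
      Finset.sum_union hdisj, hsumP, hxs_l]
    have hsF : ∑ i ∈ Finset.univ.filter (fun i : Fin n => θ i = 0), xstar i
        = (r : ℝ) * (1 / N) + (ξ / N - xl) := by
      rw [Finset.sum_congr rfl (fun i hi => hxs_F i (Finset.mem_filter.1 hi).2)]
      rw [Finset.sum_add_distrib, Finset.sum_const, ← Finset.mul_sum, hCl_sum, nsmul_eq_mul,
        ← hrdef, mul_one]
    rw [hsF, hξd]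
    field_simp [hNpos.ne']
    ring
  -- sum computations for the fixed point equation
  have hsum_ne : ∀ (x u : Fin n → ℝ) (i : Fin n), i ≠ l →
      ∑ j, Wmat C x j i * u j = x i * u i + (1 - x l) * C l i * u l := by
    intro x u i hi
    rw [sum_W]
    congr 1
    apply Finset.sum_eq_single l
    · intro j _ hjl
      rcases eq_or_ne j i with rfl | hji
      · rw [hCdiag]; ring
      · rw [(hstar j hjl).2 i hi]; ring
    · intro h; exact absurd (Finset.mem_univ l) h
  have hsum_l : ∀ x u : Fin n → ℝ, (∀ j, θ j = 0 → u j = 0) →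
      ∑ j, Wmat C x j l * u j = x l * u l + ∑ j ∈ P, (1 - x j) * u j := by
    intro x u hu
    rw [sum_W]
    congr 1
    rw [← Finset.sum_erase_add Finset.univ _ (Finset.mem_univ l)]
    have h0 : (1 - x l) * C l l * u l = 0 := by rw [hCdiag]; ring
    rw [h0, add_zero]
    have hcongr : ∑ j ∈ Finset.univ.erase l, (1 - x j) * C j l * u j
        = ∑ j ∈ Finset.univ.erase l, (1 - x j) * u j :=
      Finset.sum_congr rfl (fun j hj => by
        rw [(hstar j (Finset.mem_erase.1 hj).1).1, mul_one])
    rw [hcongr]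
    refine (Finset.sum_subset hPsub ?_).symm
    intro j hj hjP
    have hjl : j ≠ l := (Finset.mem_erase.1 hj).1
    have : ¬ 0 < θ j := by
      intro hp
      exact hjP (Finset.mem_filter.2 ⟨Finset.mem_univ j, hp, hjl⟩)
    rw [hu j (hFzero j hjl this)]
    ring
  have hterm : ∀ j, 0 < θ j → j ≠ l →
      (1 - xstar j) * (θ j * (xstar j / (1 - θ j))) = 1 / N - xstar j := by
    intro j h1 h2
    rw [hxs_P j h1 h2]
    have E := (hgfacts (θ j) h1 (hθ1 j)).1
    have e10 : (1 : ℝ) / N - g (θ j) = (1 - N * g (θ j)) / N := by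
      rw [sub_div, mul_div_cancel_left₀ _ hNpos.ne']
    calc (1 - g (θ j)) * (θ j * (g (θ j) / (1 - θ j)))
        = θ j * g (θ j) * (1 - g (θ j)) / (1 - θ j) := by ring
      _ = (1 - N * g (θ j)) / N := by
          rw [div_eq_div_iff (hθne j) hNpos.ne']
          linear_combination -E
      _ = 1 / N - g (θ j) := e10.symm
  have hsum2 : ∑ j ∈ P, (1 - xstar j) * (θ j * (xstar j / (1 - θ j)))
      = (P.card : ℝ) / N - S := by
    rw [Finset.sum_congr rfl (fun j hj => hterm j (hPθ j hj).1 (hPθ j hj).2)]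
    rw [Finset.sum_sub_distrib, Finset.sum_const, ← hsumP, nsmul_eq_mul]
    rw [mul_one_div]
  -- the fixed point equation holds
  have hfix : Fmap C θ xstar = xstar := by
    rw [fixed_iff hn0 C hCnonneg hCrow θ hθ0 hθ1 xstar hxs0 hxs1]
    intro i
    rw [← hNd]
    by_cases hil : i = l
    · rw [hil, hsum_l xstar _ (fun j h => by rw [h]; ring), hsum2, hxs_l]
      have e15 : xl * (1 - θ l * xl) * N = ξ * (1 - θ l) := by linear_combination -El
      have e16 : xl * (1 - θ l * xl) / (1 - θ l) = ξ / N :=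
        (div_eq_div_iff (hθne l) hNpos.ne').2 e15
      calc xl / (1 - θ l) - (xl * (θ l * (xl / (1 - θ l))) + ((P.card : ℝ) / N - S))
          = xl * (1 - θ l * xl) / (1 - θ l) - ((P.card : ℝ) / N - S) := by ring
        _ = ξ / N - ((P.card : ℝ) / N - S) := by rw [e16]
        _ = 1 / N := by
            rw [hξd]
            field_simp [hNpos.ne']
            linarith [hcastcard]
    by_cases hp : 0 < θ i
    · rw [hsum_ne xstar _ i hil, hCl i hp hil, hxs_P i hp hil]
      have E := (hgfacts (θ i) hp (hθ1 i)).1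
      calc g (θ i) / (1 - θ i) - (g (θ i) * (θ i * (g (θ i) / (1 - θ i)))
              + (1 - xstar l) * 0 * (θ l * (xstar l / (1 - θ l))))
          = g (θ i) * (1 - θ i * g (θ i)) / (1 - θ i) := by ring
        _ = 1 / N := by
            rw [div_eq_div_iff (hθne i) hNpos.ne']
            linear_combination -E
    · have hz := hFzero i hil hp
      rw [hsum_ne xstar _ i hil, hxs_F i hz, hxs_l, hz, hkey]
      ring
  -- uniqueness
  have huniq : ∀ y, y ∈ simplex n ∧ Fmap C θ y = y → y = xstar := by
    rintro y ⟨⟨hy0, hysum⟩, hyfix⟩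
    have hy1 : ∀ i, y i ≤ 1 := by
      intro i
      have h := Finset.single_le_sum (f := y) (fun j _ => hy0 j) (Finset.mem_univ i)
      rw [hysum] at h
      exact h
    have heqs := (fixed_iff hn0 C hCnonneg hCrow θ hθ0 hθ1 y hy0 hy1).1 hyfix
    have hyP : ∀ j, 0 < θ j → j ≠ l → y j = g (θ j) := by
      intro j h1 h2
      have h := heqs j
      rw [hsum_ne y _ j h2, hCl j h1 h2, ← hNd] at h
      have hroot : N * θ j * (y j) ^ 2 - N * (y j) + (1 - θ j) = 0 := by
        have e5 : y j * (1 - θ j * y j) / (1 - θ j) = 1 / N := by linear_combination h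
        have e6 : y j * (1 - θ j * y j) * N = 1 * (1 - θ j) :=
          (div_eq_div_iff (hθne j) hNpos.ne').1 e5
        linear_combination -e6
      exact (hgfacts (θ j) h1 (hθ1 j)).2.2.2 (y j) hroot (hy1 j)
    have hyP' : ∀ j ∈ P, y j = xstar j := fun j hj => by
      rw [hyP j (hPθ j hj).1 (hPθ j hj).2, hxs_P j (hPθ j hj).1 (hPθ j hj).2]
    have hyl : y l = xl := by
      have h := heqs l
      rw [hsum_l y _ (fun j hjz => by rw [hjz]; ring), ← hNd] at h
      have hcongr : ∑ j ∈ P, (1 - y j) * (θ j * (y j / (1 - θ j)))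
          = ∑ j ∈ P, (1 - xstar j) * (θ j * (xstar j / (1 - θ j))) :=
        Finset.sum_congr rfl (fun j hj => by rw [hyP' j hj])
      rw [hcongr, hsum2] at h
      have hroot : N * θ l * (y l) ^ 2 - N * (y l) + (1 - θ l) * ξ = 0 := by
        have e13 : y l * (1 - θ l * y l) / (1 - θ l) = ξ / N := by
          have h2 : y l * (1 - θ l * y l) / (1 - θ l) = 1 / N + ((P.card : ℝ) / N - S) := by
            linear_combination h
          rw [h2, hξd]
          field_simp [hNpos.ne']
          linarith [hcastcard]
        have e14 : y l * (1 - θ l * y l) * N = ξ * (1 - θ l) :=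
          (div_eq_div_iff (hθne l) hNpos.ne').1 e13
        linear_combination -e14
      exact hxluniq (y l) hroot (hy1 l)
    have hyF : ∀ i, θ i = 0 → y i = xstar i := by
      intro i h
      have hil : i ≠ l := fun e => by rw [e] at h; exact hl.ne' h
      have heq := heqs i
      rw [hsum_ne y _ i hil, hyl, h, ← hNd] at heq
      rw [hxs_F i h, hkey]
      linear_combination heq
    funext i
    by_cases hil : i = l
    · rw [hil, hyl, hxs_l]
    by_cases hp : 0 < θ i
    · rw [hyP i hp hil, hxs_P i hp hil]
    · exact hyF i (hFzero i hil hp)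
  refine ⟨xstar, ⟨⟨hxs0, hsum_xstar⟩, hfix⟩, huniq, ?_, ?_, ?_, ?_⟩
  · intro i h1 h2
    rw [hxs_P i h1 h2, hgd]
  · exact g_anti N hN2
  · rw [hxs_l, hsumP, ← hξd, hxld]
  · intro i h
    rw [hxs_F i h, hsumP, hxs_l, ← hξd]
end

section
/- Suppose 𝒢(C) is a star topology with center node l and the center is partially stubborn with 0 < θ_l < 1. Then every fixed point x* ∈ Δ_n of F satisfies: (i) for any fully stubborn i, j: if C_li > C_lj then x*_i > x*_j; (ii) for any fully stubborn i and partially stubborn j ≠ l with C_li = C_lj: x*_i > x*_j; (iii) for any partially stubborn i, j ≠ l with C_li = C_lj: x*_i > x*_j if and only if θ_i < θ_j; (iv) for any partially stubborn i, j ≠ l with θ_i = θ_j: x*_i > x*_j if and only if C_li > C_lj. -/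
open Matrix

lemma det_ne {n : ℕ} (W : Matrix (Fin n) (Fin n) ℝ) (θ : Fin n → ℝ)
    (hθ1 : ∀ i, θ i < 1) (hθ0 : ∀ i, 0 ≤ θ i)
    (hWnn : ∀ i j, 0 ≤ W i j) (hWrow : ∀ i, ∑ j, W i j = 1) (hne : Nonempty (Fin n)) :
    ((1 : Matrix (Fin n) (Fin n) ℝ) - Wᵀ * Matrix.diagonal θ).det ≠ 0 := by
  have htr : ((1 : Matrix (Fin n) (Fin n) ℝ) - Wᵀ * Matrix.diagonal θ).det
      = ((1 : Matrix (Fin n) (Fin n) ℝ) - Matrix.diagonal θ * W).det := by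
    rw [← Matrix.det_transpose]
    congr 1
    rw [Matrix.transpose_sub, Matrix.transpose_one, Matrix.transpose_mul,
      Matrix.diagonal_transpose, Matrix.transpose_transpose]
  rw [htr]
  intro hdet
  obtain ⟨v, hv0, hv⟩ := Matrix.exists_mulVec_eq_zero_iff.mpr hdet
  obtain ⟨i, hi⟩ := Finset.exists_max_image Finset.univ (fun i => |v i|) ⟨hne.some, Finset.mem_univ _⟩
  obtain ⟨_, hi⟩ := hi
  have hvi : v i = θ i * ∑ j, W i j * v j := by
    have h := congrFun hv i
    simp only [Matrix.mulVec, dotProduct, Matrix.sub_apply, Matrix.one_apply,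
      Matrix.diagonal_mul, Pi.zero_apply, sub_mul, ite_mul, one_mul, zero_mul] at h
    rw [Finset.sum_sub_distrib, Finset.sum_ite_eq] at h
    simp only [Finset.mem_univ, if_true, sub_eq_zero] at h
    rw [h, Finset.mul_sum]
    congr 1; ext j; ring
  have hb : |v i| ≤ θ i * |v i| := by
    calc |v i| = θ i * |∑ j, W i j * v j| := by rw [hvi, abs_mul, abs_of_nonneg (hθ0 i)]
    _ ≤ θ i * ∑ j, |W i j * v j| := by
        exact mul_le_mul_of_nonneg_left (Finset.abs_sum_le_sum_abs _ _) (hθ0 i)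
    _ ≤ θ i * ∑ j, W i j * |v i| := by
        apply mul_le_mul_of_nonneg_left _ (hθ0 i)
        apply Finset.sum_le_sum
        intro j _
        rw [abs_mul, abs_of_nonneg (hWnn i j)]
        exact mul_le_mul_of_nonneg_left (hi j (Finset.mem_univ j)) (hWnn i j)
    _ = θ i * |v i| := by rw [← Finset.sum_mul, hWrow i, one_mul]
  have hvi0 : |v i| = 0 := by nlinarith [abs_nonneg (v i), hθ1 i]
  apply hv0
  funext j
  have h1 := hi j (Finset.mem_univ j)
  have h2 : |v j| = 0 := le_antisymm (by linarith) (abs_nonneg _)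
  simpa using h2

set_option maxHeartbeats 2000000 in
theorem stmt17 (n : ℕ) (hn : 2 ≤ n) (C : Matrix (Fin n) (Fin n) ℝ)
    (hCnonneg : ∀ i j, 0 ≤ C i j) (hCrow : ∀ i, ∑ j, C i j = 1)
    (hCdiag : ∀ i, C i i = 0)
    (θ : Fin n → ℝ) (hθ0 : ∀ i, 0 ≤ θ i) (hθ1 : ∀ i, θ i < 1) (hθex : ∃ j, 0 < θ j)
    (l : Fin n) (hstar : ∀ i, i ≠ l → C i l = 1 ∧ ∀ j, j ≠ l → C i j = 0)
    (hl : 0 < θ l)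
    (xstar : Fin n → ℝ) (hmem : xstar ∈ simplex n) (hfix : Fmap C θ xstar = xstar) :
    (∀ i j, θ i = 0 → θ j = 0 → C l j < C l i → xstar j < xstar i) ∧
    (∀ i j, θ i = 0 → 0 < θ j → j ≠ l → C l i = C l j → xstar j < xstar i) ∧
    (∀ i j, 0 < θ i → 0 < θ j → i ≠ l → j ≠ l → C l i = C l j →
      (xstar j < xstar i ↔ θ i < θ j)) ∧
    (∀ i j, 0 < θ i → 0 < θ j → i ≠ l → j ≠ l → θ i = θ j →
      (xstar j < xstar i ↔ C l j < C l i)) := by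
  obtain ⟨hx0, hsum⟩ := hmem
  have hnR : (2:ℝ) ≤ (n:ℝ) := by exact_mod_cast hn
  have hinv : (0:ℝ) < 1/(n:ℝ) := by positivity
  have hx1 : ∀ i, xstar i ≤ 1 := by
    intro i
    have h := Finset.single_le_sum (f := xstar) (fun j _ => hx0 j) (Finset.mem_univ i)
    linarith [hsum]
  set W := Wmat C xstar with hW
  have hWnn : ∀ i j, 0 ≤ W i j := by
    intro i j
    rw [hW, Wmat_apply]
    have h1 := hCnonneg i j; have h2 := hx0 i; have h3 := hx1 i
    by_cases h : i = j
    · subst h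
      simp only [if_true, if_pos trivial]
      nlinarith [mul_nonneg (by linarith : (0:ℝ) ≤ 1 - xstar i) h1]
    · rw [if_neg h]
      nlinarith [mul_nonneg (by linarith : (0:ℝ) ≤ 1 - xstar i) h1]
  have hWrow : ∀ i, ∑ j, W i j = 1 := by
    intro i
    simp only [hW, Wmat_apply]
    rw [Finset.sum_add_distrib, Finset.sum_ite_eq, ← Finset.mul_sum, hCrow i]
    simp
  set M := (1 : Matrix (Fin n) (Fin n) ℝ) - Wᵀ * Matrix.diagonal θ with hM
  have hdet : M.det ≠ 0 := det_ne W θ hθ1 hθ0 hWnn hWrow ⟨l⟩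
  have hdetu : IsUnit M.det := isUnit_iff_ne_zero.mpr hdet
  set y := M⁻¹.mulVec (fun _ => 1/(n:ℝ)) with hy
  have hxy : ∀ i, xstar i = (1 - θ i) * y i := by
    intro i
    conv_lhs => rw [← hfix]
    show ((1 - Matrix.diagonal θ) * M⁻¹).mulVec (fun _ => 1/(n:ℝ)) i = _
    rw [← Matrix.mulVec_mulVec]
    show ((1 - Matrix.diagonal θ).mulVec y) i = _
    simp only [Matrix.mulVec, dotProduct, Matrix.sub_apply, Matrix.one_apply,
      Matrix.diagonal_apply, sub_mul, ite_mul, one_mul, zero_mul]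
    rw [Finset.sum_sub_distrib, Finset.sum_ite_eq, Finset.sum_ite_eq]
    simp only [Finset.mem_univ, if_true]
  have hMy : M.mulVec y = (fun _ => 1/(n:ℝ)) := by
    rw [hy, Matrix.mulVec_mulVec, Matrix.mul_nonsing_inv M hdetu, Matrix.one_mulVec]
  have hcomp : ∀ i, y i - ∑ j, W j i * θ j * y j = 1/(n:ℝ) := by
    intro i
    have h := congrFun hMy i
    rw [hM] at h
    simp only [Matrix.mulVec, dotProduct, Matrix.sub_apply, Matrix.one_apply,
      Matrix.mul_diagonal, Matrix.transpose_apply, sub_mul, ite_mul, one_mul, zero_mul] at h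
    rw [Finset.sum_sub_distrib, Finset.sum_ite_eq] at h
    simp only [Finset.mem_univ, if_true] at h
    rw [← h]
  have hEi : ∀ i, i ≠ l → y i * (1 - θ i * xstar i)
      = 1/(n:ℝ) + (1 - xstar l) * θ l * y l * C l i := by
    intro i hil
    have h := hcomp i
    have hsplit : ∑ j, W j i * θ j * y j = W i i * θ i * y i + W l i * θ l * y l := by
      have hp : ∑ j ∈ ({i, l} : Finset (Fin n)), W j i * θ j * y j
          = W i i * θ i * y i + W l i * θ l * y l := Finset.sum_pair hil
      rw [← hp]
      symm
      apply Finset.sum_subset (Finset.subset_univ _)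
      intro j _ hj
      simp only [Finset.mem_insert, Finset.mem_singleton] at hj
      push_neg at hj
      have hCji : C j i = 0 := (hstar j hj.2).2 i hil
      have hz : W j i = 0 := by rw [hW, Wmat_apply, if_neg hj.1, hCji]; ring
      rw [hz]; ring
    have hWii : W i i = xstar i := by rw [hW, Wmat_apply, if_pos rfl, hCdiag i]; ring
    have hWli : W l i = (1 - xstar l) * C l i := by
      rw [hW, Wmat_apply, if_neg (Ne.symm hil)]; ring
    rw [hsplit, hWii, hWli] at h
    linear_combination h
  have hEl : y l * (1 - θ l * xstar l)
      = 1/(n:ℝ) + ∑ j ∈ Finset.univ.erase l, (1 - xstar j) * (θ j * y j) := by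
    have h := hcomp l
    have hWll : W l l = xstar l := by rw [hW, Wmat_apply, if_pos rfl, hCdiag l]; ring
    have hsplit : ∑ j, W j l * θ j * y j
        = xstar l * θ l * y l + ∑ j ∈ Finset.univ.erase l, (1 - xstar j) * (θ j * y j) := by
      rw [← Finset.sum_erase_add Finset.univ _ (Finset.mem_univ l), hWll, add_comm]
      congr 1
      apply Finset.sum_congr rfl
      intro j hj
      have hjl : j ≠ l := (Finset.mem_erase.mp hj).1
      have hWjl : W j l = 1 - xstar j := by
        rw [hW, Wmat_apply, if_neg hjl, (hstar j hjl).1]; ring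
      rw [hWjl]; ring
    rw [hsplit] at h
    linear_combination h
  clear hMy hcomp hy hdet hdetu hfix
  clear_value y
  clear hM M hWnn hWrow hW W
  have hy0 : ∀ i, 0 ≤ y i := by
    intro i
    by_contra h
    push_neg at h
    nlinarith [hx0 i, hθ1 i, hxy i]
  have hS0 : 0 ≤ ∑ j ∈ Finset.univ.erase l, (1 - xstar j) * (θ j * y j) :=
    Finset.sum_nonneg fun j _ =>
      mul_nonneg (by linarith [hx1 j]) (mul_nonneg (hθ0 j) (hy0 j))
  have hθxl : θ l * xstar l < 1 := by nlinarith [hθ1 l, hx1 l, hθ0 l, hx0 l]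
  have hyl : 0 < y l := by nlinarith [hEl, hS0, hinv, hθxl, hy0 l]
  have hxl : 0 < xstar l := by
    rw [hxy l]; exact mul_pos (by linarith [hθ1 l]) hyl
  have ha0 : 0 ≤ (1 - xstar l) * θ l * y l :=
    mul_nonneg (mul_nonneg (by linarith [hx1 l]) (hθ0 l)) (le_of_lt hyl)
  have hyi : ∀ i, i ≠ l → 0 < y i := by
    intro i hil
    have h := hEi i hil
    have hbpos : 0 < 1/(n:ℝ) + (1 - xstar l) * θ l * y l * C l i :=
      add_pos_of_pos_of_nonneg hinv (mul_nonneg ha0 (hCnonneg l i))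
    have hfac : 0 < 1 - θ i * xstar i := by nlinarith [hθ1 i, hx1 i, hθ0 i, hx0 i]
    nlinarith
  have hxi : ∀ i, i ≠ l → 0 < xstar i := by
    intro i hil
    rw [hxy i]; exact mul_pos (by linarith [hθ1 i]) (hyi i hil)
  obtain ⟨k, hkl⟩ : ∃ k : Fin n, k ≠ l := by
    have : 1 < Fintype.card (Fin n) := by simp; omega
    exact Fintype.exists_ne_of_one_lt_card this l
  have hpair : ∀ i j : Fin n, i ≠ j → xstar i + xstar j ≤ 1 := by
    intro i j hij
    have h := Finset.sum_le_sum_of_subset_of_nonneg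
      (Finset.subset_univ ({i, j} : Finset (Fin n))) (fun t _ _ => hx0 t)
    rw [Finset.sum_pair hij] at h
    linarith [hsum]
  have hxl1 : xstar l < 1 := by linarith [hpair k l hkl, hxi k hkl]
  have hA : 0 < (1 - xstar l) * θ l * y l :=
    mul_pos (mul_pos (by linarith) hl) hyl
  have htrip : ∀ i j : Fin n, i ≠ j → i ≠ l → j ≠ l →
      xstar i + xstar j + xstar l ≤ 1 := by
    intro i j hij hil hjl
    have h := Finset.sum_le_sum_of_subset_of_nonneg
      (Finset.subset_univ ({i, j, l} : Finset (Fin n))) (fun t _ _ => hx0 t)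
    rw [Finset.sum_insert (by simp [hij, hil]), Finset.sum_pair hjl] at h
    linarith [hsum]
  -- quadratic relations
  have hbx : ∀ i, i ≠ l → (1/(n:ℝ) + (1 - xstar l) * θ l * y l * C l i) - xstar i
      = θ i * y i * (1 - xstar i) := by
    intro i hil
    have h1 := hEi i hil
    have h2 := hxy i
    linear_combination -h1 - h2
  have hb2 : ∀ i, i ≠ l → (1/(n:ℝ) + (1 - xstar l) * θ l * y l * C l i) - xstar i ^ 2
      = y i * (1 - xstar i) := by
    intro i hil
    have h1 := hEi i hil
    have h2 := hxy i
    linear_combination -h1 - xstar i * h2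
  have hQ : ∀ i, i ≠ l → (1/(n:ℝ) + (1 - xstar l) * θ l * y l * C l i) - xstar i
      = θ i * ((1/(n:ℝ) + (1 - xstar l) * θ l * y l * C l i) - xstar i ^ 2) := by
    intro i hil
    rw [hb2 i hil]
    linear_combination hbx i hil
  have hxlt1 : ∀ i, i ≠ l → xstar i < 1 := by
    intro i hil
    linarith [hpair i l hil, hxl]
  have hxltb : ∀ i, i ≠ l → 0 < θ i →
      xstar i < 1/(n:ℝ) + (1 - xstar l) * θ l * y l * C l i := by
    intro i hil hti
    have h := hbx i hil
    nlinarith [mul_pos (mul_pos hti (hyi i hil)) (sub_pos.mpr (hxlt1 i hil))]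
  refine ⟨?_, ?_, ?_, ?_⟩
  · -- (i) both fully stubborn
    intro i j hti htj hC
    have hil : i ≠ l := by rintro rfl; rw [hti] at hl; linarith
    have hjl : j ≠ l := by rintro rfl; rw [htj] at hl; linarith
    have ei : xstar i = 1/(n:ℝ) + (1 - xstar l) * θ l * y l * C l i := by
      have h1 := hEi i hil; have h2 := hxy i
      rw [hti] at h1 h2
      linear_combination h1 + h2
    have ej : xstar j = 1/(n:ℝ) + (1 - xstar l) * θ l * y l * C l j := by
      have h1 := hEi j hjl; have h2 := hxy j
      rw [htj] at h1 h2
      linear_combination h1 + h2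
    have hm := mul_lt_mul_of_pos_left hC hA
    linarith
  · -- (ii)
    intro i j hti htj hjl hC
    have hil : i ≠ l := by rintro rfl; rw [hti] at hl; linarith
    have ei : xstar i = 1/(n:ℝ) + (1 - xstar l) * θ l * y l * C l i := by
      have h1 := hEi i hil; have h2 := hxy i
      rw [hti] at h1 h2
      linear_combination h1 + h2
    have hj := hxltb j hjl htj
    rw [← hC] at hj
    linarith
  · -- (iii)
    intro i j hti htj hil hjl hC
    by_cases hij : i = j
    · subst hij; simp
    have Qi := hQ i hil
    have Qj := hQ j hjl
    rw [← hC] at Qj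
    obtain ⟨b, hbdef⟩ : ∃ b : ℝ, b = 1/(n:ℝ) + (1 - xstar l) * θ l * y l * C l i := ⟨_, rfl⟩
    rw [← hbdef] at Qi Qj
    have hbpos : 0 < b := by
      rw [hbdef]
      exact add_pos_of_pos_of_nonneg hinv (mul_nonneg ha0 (hCnonneg l i))
    have hxbi : xstar i < b := by rw [hbdef]; exact hxltb i hil hti
    have hxbj : xstar j < b := by
      have h := hxltb j hjl htj; rw [← hC] at h; rw [hbdef]; exact h
    clear hbdef
    have hK1i : 0 < b - xstar i ^ 2 := by
      nlinarith [hx0 i, hxlt1 i hil]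
    have hK1j : 0 < b - xstar j ^ 2 := by
      nlinarith [hx0 j, hxlt1 j hjl]
    have hK2 : 0 < b * (1 - xstar i - xstar j) + xstar i * xstar j := by
      have ht := htrip i j hij hil hjl
      have h1 : (0:ℝ) ≤ 1 - xstar i - xstar j := by linarith [hxl]
      have h2 := mul_nonneg hbpos.le h1
      have h3 := mul_pos (hxi i hil) (hxi j hjl)
      linarith [h2, h3]
    have master : (θ i - θ j) * ((b - xstar i ^ 2) * (b - xstar j ^ 2))
        = (xstar j - xstar i) * (b * (1 - xstar i - xstar j) + xstar i * xstar j) := by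
      linear_combination (b - xstar i ^ 2) * Qj - (b - xstar j ^ 2) * Qi
    constructor
    · intro h
      by_contra h'
      push_neg at h'
      have t1 : 0 ≤ (θ i - θ j) * ((b - xstar i ^ 2) * (b - xstar j ^ 2)) :=
        mul_nonneg (by linarith) (mul_pos hK1i hK1j).le
      have t2 : (xstar j - xstar i) * (b * (1 - xstar i - xstar j) + xstar i * xstar j) < 0 :=
        mul_neg_of_neg_of_pos (by linarith) hK2
      linarith [master, t1, t2]
    · intro h
      by_contra h'
      push_neg at h'
      have t1 : (θ i - θ j) * ((b - xstar i ^ 2) * (b - xstar j ^ 2)) < 0 :=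
        mul_neg_of_neg_of_pos (by linarith) (mul_pos hK1i hK1j)
      have t2 : 0 ≤ (xstar j - xstar i) * (b * (1 - xstar i - xstar j) + xstar i * xstar j) :=
        mul_nonneg (by linarith) hK2.le
      linarith [master, t1, t2]
  · -- (iv)
    intro i j hti htj hil hjl hθij
    by_cases hij : i = j
    · subst hij; simp
    have Qi := hQ i hil
    have Qj := hQ j hjl
    rw [← hθij] at Qj
    have hfac : 0 < 1 - θ i * (xstar i + xstar j) := by
      have ht := htrip i j hij hil hjl
      nlinarith [hθ0 i, hθ1 i, hxi i hil, hxi j hjl, hxl]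
    have master : (1 - xstar l) * θ l * y l * (C l i - C l j) * (1 - θ i)
        = (xstar i - xstar j) * (1 - θ i * (xstar i + xstar j)) := by
      linear_combination Qi - Qj
    have hθi1 : 0 < 1 - θ i := by linarith [hθ1 i]
    constructor
    · intro h
      by_contra h'
      push_neg at h'
      have t1 : (1 - xstar l) * θ l * y l * (C l i - C l j) * (1 - θ i) ≤ 0 := by
        have hc : C l i - C l j ≤ 0 := by linarith
        have := mul_nonpos_of_nonneg_of_nonpos hA.le hc
        exact mul_nonpos_of_nonpos_of_nonneg this hθi1.le
      have t2 : 0 < (xstar i - xstar j) * (1 - θ i * (xstar i + xstar j)) :=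
        mul_pos (by linarith) hfac
      linarith [master, t1, t2]
    · intro h
      by_contra h'
      push_neg at h'
      have t1 : 0 < (1 - xstar l) * θ l * y l * (C l i - C l j) * (1 - θ i) :=
        mul_pos (mul_pos hA (by linarith)) hθi1
      have t2 : (xstar i - xstar j) * (1 - θ i * (xstar i + xstar j)) ≤ 0 :=
        mul_nonpos_of_nonpos_of_nonneg (by linarith) hfac.le
      linarith [master, t1, t2]
end
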